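/- Let N ≥ 2, and let π* be uniform over the N one-hot vectors in {0,1}^N. For any product distribution π_ind with parameters p₁,…,p_N ∈ (0,1), the KL divergence KL(π* ‖ π_ind) is at least -(N-1)·log(1 - 1/N), and hence at least 1 - 1/N > 0. -/

import Mathlib

/-!
Only the one-hot atoms carry mass under `π*`, so the divergence equals
`-log N - ∑ i, ((1/N) log pᵢ + (1 - 1/N) log (1 - pᵢ))`, which separates over the coordinates.
Each summand is a Bernoulli cross-entropy, maximised at `pᵢ = 1/N` by Gibbs' inequality; this gives
`-(N-1) log (1 - 1/N)`, and `-log (1 - x) ≥ x` gives the final bound.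
-/

open Finset Real

lemma mul_log_div_le_sub {b y : ℝ} (hb : 0 < b) (hy : 0 < y) : b * log (y / b) ≤ y - b := by
  have := mul_le_mul_of_nonneg_left (log_le_sub_one_of_pos (div_pos hy hb)) hb.le
  rwa [mul_sub, mul_div_cancel₀ _ hb.ne', mul_one] at this

lemma mul_log_add_mul_log_one_sub_le {a x : ℝ} (ha : 0 < a) (ha1 : a < 1) (hx : 0 < x)
    (hx1 : x < 1) :
    a * log x + (1 - a) * log (1 - x) ≤ a * log a + (1 - a) * log (1 - a) := by
  have hb : 0 < 1 - a := sub_pos.2 ha1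
  have hy : 0 < 1 - x := sub_pos.2 hx1
  have h₁ := mul_log_div_le_sub ha hx
  have h₂ := mul_log_div_le_sub hb hy
  rw [log_div hx.ne' ha.ne'] at h₁
  rw [log_div hy.ne' hb.ne'] at h₂
  linarith

section OneHot

variable {ι : Type*} [Fintype ι] [DecidableEq ι]

lemma log_div_oneHot_prob [Nonempty ι] {p : ι → ℝ} (hp0 : ∀ i, p i ≠ 0) (hp1 : ∀ i, p i ≠ 1)
    (j : ι) :
    log ((1 / (Fintype.card ι : ℝ)) / (p j * ∏ i ∈ univ.erase j, (1 - p i))) =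
      -log (Fintype.card ι) - log (p j) - (∑ i, log (1 - p i) - log (1 - p j)) := by
  have hq : ∀ i, 1 - p i ≠ 0 := fun i => sub_ne_zero.2 (hp1 i).symm
  have hprod : ∏ i ∈ univ.erase j, (1 - p i) ≠ 0 := prod_ne_zero_iff.2 fun i _ => hq i
  rw [log_div (one_div_ne_zero (Nat.cast_ne_zero.2 Fintype.card_ne_zero))
      (mul_ne_zero (hp0 j) hprod), log_mul (hp0 j) hprod, log_prod fun i _ => hq i,
    sum_erase_eq_sub (mem_univ j), one_div, log_inv]
  ring

/-- `KL(π* ‖ π_ind)` as a sum over the one-hot atoms, the support of `π*`. -/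
noncomputable def klOneHotProduct (p : ι → ℝ) : ℝ :=
  ∑ j, (1 / (Fintype.card ι : ℝ)) *
    log ((1 / (Fintype.card ι : ℝ)) / (p j * ∏ i ∈ univ.erase j, (1 - p i)))

lemma klOneHotProduct_eq [Nonempty ι] {p : ι → ℝ} (hp0 : ∀ i, p i ≠ 0) (hp1 : ∀ i, p i ≠ 1) :
    klOneHotProduct p = -log (Fintype.card ι) -
      ∑ i, ((1 / (Fintype.card ι : ℝ)) * log (p i) +
        (1 - 1 / (Fintype.card ι : ℝ)) * log (1 - p i)) := by
  have hn : (Fintype.card ι : ℝ) ≠ 0 := Nat.cast_ne_zero.2 Fintype.card_ne_zero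
  simp only [klOneHotProduct, log_div_oneHot_prob hp0 hp1, ← mul_sum, sum_add_distrib,
    sum_sub_distrib, sum_const, card_univ, nsmul_eq_mul]
  field_simp
  ring

lemma neg_mul_log_one_sub_inv_le_klOneHotProduct (hι : 1 < Fintype.card ι) {p : ι → ℝ}
    (hp : ∀ i, p i ∈ Set.Ioo (0 : ℝ) 1) :
    -((Fintype.card ι : ℝ) - 1) * log (1 - 1 / (Fintype.card ι : ℝ)) ≤ klOneHotProduct p := by
  have : Nonempty ι := Fintype.card_pos_iff.1 (by omega)
  have hn : (1 : ℝ) < Fintype.card ι := by exact_mod_cast hι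
  have ha : 0 < 1 / (Fintype.card ι : ℝ) := by positivity
  have ha1 : 1 / (Fintype.card ι : ℝ) < 1 := (div_lt_one (by linarith)).2 hn
  have hgibbs := sum_le_sum fun i (_ : i ∈ univ) =>
    mul_log_add_mul_log_one_sub_le ha ha1 (hp i).1 (hp i).2
  have hexpand (L : ℝ) :
      (Fintype.card ι : ℝ) * ((Fintype.card ι : ℝ)⁻¹ * -log (Fintype.card ι) +
        (1 - (Fintype.card ι : ℝ)⁻¹) * L) =
      -log (Fintype.card ι) + ((Fintype.card ι : ℝ) - 1) * L := by
    field_simp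
  rw [sum_const, card_univ, nsmul_eq_mul, one_div, log_inv, hexpand] at hgibbs
  rw [klOneHotProduct_eq (fun i => (hp i).1.ne') (fun i => (hp i).2.ne)]
  simp only [one_div] at hgibbs ⊢
  linarith

end OneHot

lemma one_sub_inv_le_neg_mul_log_one_sub_inv {n : ℝ} (hn : 1 < n) :
    1 - 1 / n ≤ -(n - 1) * log (1 - 1 / n) := by
  have hpos : 0 < 1 - 1 / n := sub_pos.2 ((div_lt_one (by linarith)).2 hn)
  have hlog : log (1 - 1 / n) ≤ -(1 / n) := by linarith [log_le_sub_one_of_pos hpos]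
  calc 1 - 1 / n = (n - 1) * (1 / n) := by field_simp
    _ ≤ -(n - 1) * log (1 - 1 / n) := by nlinarith

theorem stmt10 (N : ℕ) (hN : 2 ≤ N) (p : Fin N → ℝ)
    (hp : ∀ i, p i ∈ Set.Ioo (0:ℝ) 1) :
    -- KL(π* ‖ π_ind) where π* is uniform over the N one-hot vectors:
    -- only the one-hot atoms contribute, the j-th with mass 1/N and
    -- product probability p j * ∏_{i ≠ j} (1 - p i).
    (∑ j : Fin N, (1 / (N:ℝ)) *
        Real.log ((1 / (N:ℝ)) / (p j * ∏ i ∈ Finset.univ.erase j, (1 - p i))))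
      ≥ -((N:ℝ) - 1) * Real.log (1 - 1 / (N:ℝ)) ∧
    (∑ j : Fin N, (1 / (N:ℝ)) *
        Real.log ((1 / (N:ℝ)) / (p j * ∏ i ∈ Finset.univ.erase j, (1 - p i))))
      ≥ 1 - 1 / (N:ℝ) ∧
    (0:ℝ) < 1 - 1 / (N:ℝ) := by
  have hN' : (1 : ℝ) < N := by exact_mod_cast hN
  have hkl := neg_mul_log_one_sub_inv_le_klOneHotProduct (by rw [Fintype.card_fin]; omega) hp
  simp only [klOneHotProduct, Fintype.card_fin] at hkl
  have hbound := one_sub_inv_le_neg_mul_log_one_sub_inv hN'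
  exact ⟨hkl, hbound.trans hkl, sub_pos.2 ((div_lt_one (by linarith)).2 hN')⟩
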